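/- arXiv:math/0403259 — 2 statements merged into one kernel-verified Lean document; each statement's English description precedes it below -/
import Mathlib

section
/- Let 0 < c < 1. For every n ≥ 2, the expected size of the component of vertex 1 in G(n, c/n) satisfies E[|C_1|] ≤ 1/(1−c). -/
open MeasureTheory ProbabilityTheory Filter Topology
open scoped ENNReal NNReal

/-- The Bernoulli measure on `Bool` giving mass `p` to `true` and `1 - p` to `false`
(a probability measure when `0 ≤ p ≤ 1`). -/
noncomputable def bernoulliMeasure (p : ℝ) : Measure Bool :=
  ENNReal.ofReal p • Measure.dirac true + ENNReal.ofReal (1 - p) • Measure.dirac false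

/-- The Erdős–Rényi measure: each potential edge (pair `i < j`) is open independently
with probability `p`. -/
noncomputable def erdosRenyi (n : ℕ) (p : ℝ) :
    Measure ({e : Fin n × Fin n // e.1 < e.2} → Bool) :=
  Measure.pi fun _ => bernoulliMeasure p

/-- The simple graph on `Fin n` associated to an edge configuration. -/
def graphOf {n : ℕ} (x : {e : Fin n × Fin n // e.1 < e.2} → Bool) : SimpleGraph (Fin n) where
  Adj i j := (∃ h : i < j, x ⟨(i, j), h⟩ = true) ∨ (∃ h : j < i, x ⟨(j, i), h⟩ = true)
  symm := ⟨by intro i j h; exact Or.symm h⟩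
  loopless := ⟨by rintro i (⟨h, -⟩ | ⟨h, -⟩) <;> exact absurd h (lt_irrefl i)⟩

/-- The number of vertices of the connected component of `v`. -/
noncomputable def compSize {n : ℕ} (G : SimpleGraph (Fin n)) (v : Fin n) : ℕ :=
  Nat.card {y : Fin n // G.Reachable v y}

section Aux

open scoped Classical

abbrev EdgeIdx (n : ℕ) := {e : Fin n × Fin n // e.1 < e.2}

instance bernoulliMeasure_finite (p : ℝ) : IsFiniteMeasure (bernoulliMeasure p) := by
  constructor
  simp only [_root_.bernoulliMeasure, Measure.add_apply, Measure.smul_apply, smul_eq_mul]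
  rw [Measure.dirac_apply_of_mem (Set.mem_univ _), Measure.dirac_apply_of_mem (Set.mem_univ _)]
  rw [mul_one, mul_one]
  exact ENNReal.add_lt_top.mpr ⟨ENNReal.ofReal_lt_top, ENNReal.ofReal_lt_top⟩

lemma bernoulliMeasure_true (p : ℝ) : bernoulliMeasure p {true} = ENNReal.ofReal p := by
  simp [_root_.bernoulliMeasure, Measure.dirac_apply]

lemma bernoulliMeasure_univ {p : ℝ} (hp0 : 0 ≤ p) (hp1 : p ≤ 1) :
    bernoulliMeasure p Set.univ = 1 := by
  simp only [_root_.bernoulliMeasure, Measure.add_apply, Measure.smul_apply, smul_eq_mul]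
  rw [Measure.dirac_apply_of_mem (Set.mem_univ _), Measure.dirac_apply_of_mem (Set.mem_univ _)]
  rw [mul_one, mul_one, ← ENNReal.ofReal_add hp0 (by linarith)]
  norm_num

lemma erdosRenyi_cylinder {n : ℕ} {p : ℝ} (hp0 : 0 ≤ p) (hp1 : p ≤ 1)
    (S : Finset (EdgeIdx n)) :
    erdosRenyi n p {x | ∀ e ∈ S, x e = true} = ENNReal.ofReal p ^ S.card := by
  have hset : {x : EdgeIdx n → Bool | ∀ e ∈ S, x e = true}
      = Set.pi Set.univ (fun e => if e ∈ S then ({true} : Set Bool) else Set.univ) := by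
    ext x
    simp only [Set.mem_setOf_eq, Set.mem_pi, Set.mem_univ, forall_true_left]
    constructor
    · intro h e
      by_cases he : e ∈ S
      · simp [he, h e he]
      · simp [he]
    · intro h e he
      have := h e
      simpa [he] using this
  rw [hset, erdosRenyi, Measure.pi_pi]
  have hval : ∀ e : EdgeIdx n,
      bernoulliMeasure p (if e ∈ S then ({true} : Set Bool) else Set.univ)
      = if e ∈ S then ENNReal.ofReal p else 1 := by
    intro e
    by_cases he : e ∈ S
    · rw [if_pos he, if_pos he, bernoulliMeasure_true]
    · rw [if_neg he, if_neg he, bernoulliMeasure_univ hp0 hp1]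
  simp only [hval]
  rw [Finset.prod_ite_mem, Finset.univ_inter, Finset.prod_const]

/-- the ordered edge coordinate of an unordered pair -/
def edg {n : ℕ} (a b : Fin n) (h : a ≠ b) : EdgeIdx n :=
  if hab : a < b then ⟨(a, b), hab⟩ else ⟨(b, a), (not_lt.mp hab).lt_of_ne h.symm⟩

lemma edg_spec {n : ℕ} {a b : Fin n} (h : a ≠ b) (x : EdgeIdx n → Bool)
    (hadj : (graphOf x).Adj a b) : x (edg a b h) = true := by
  rcases hadj with ⟨hab, hx⟩ | ⟨hba, hx⟩
  · rw [edg, dif_pos hab]; exact hx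
  · rw [edg, dif_neg (lt_asymm hba)]; exact hx

lemma edg_eq {n : ℕ} {a b c d : Fin n} (h : a ≠ b) (h' : c ≠ d)
    (he : edg a b h = edg c d h') : (a = c ∧ b = d) ∨ (a = d ∧ b = c) := by
  have hv := congrArg Subtype.val he
  unfold edg at hv
  split_ifs at hv <;> simp only [Prod.mk.injEq] at hv <;> tauto

lemma chain_measure {n : ℕ} {p : ℝ} (hp0 : 0 ≤ p) (hp1 : p ≤ 1) {k : ℕ}
    (f : Fin (k + 1) → Fin n) (hf : Function.Injective f) :
    erdosRenyi n p {x | ∀ i : Fin k, (graphOf x).Adj (f i.castSucc) (f i.succ)}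
      ≤ ENNReal.ofReal p ^ k := by
  have hne : ∀ i : Fin k, f i.castSucc ≠ f i.succ := by
    intro i hEq
    have := congrArg Fin.val (hf hEq)
    simp [Fin.val_succ] at this
  set g : Fin k → EdgeIdx n := fun i => edg _ _ (hne i) with hg_def
  have hg : Function.Injective g := by
    intro i j hij
    rcases edg_eq _ _ hij with ⟨h1, h2⟩ | ⟨h1, h2⟩
    · have := congrArg Fin.val (hf h1)
      simpa [Fin.ext_iff] using this
    · have e1 := congrArg Fin.val (hf h1)
      have e2 := congrArg Fin.val (hf h2)
      simp [Fin.val_succ] at e1 e2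
      exact absurd e1 (by omega)
  have hsub : {x : EdgeIdx n → Bool | ∀ i : Fin k, (graphOf x).Adj (f i.castSucc) (f i.succ)}
      ⊆ {x | ∀ e ∈ Finset.image g Finset.univ, x e = true} := by
    intro x hx e he
    simp only [Finset.mem_image, Finset.mem_univ, true_and] at he
    obtain ⟨i, rfl⟩ := he
    exact edg_spec _ x (hx i)
  calc erdosRenyi n p {x | ∀ i : Fin k, (graphOf x).Adj (f i.castSucc) (f i.succ)}
      ≤ erdosRenyi n p {x | ∀ e ∈ Finset.image g Finset.univ, x e = true} :=
        measure_mono hsub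
    _ = ENNReal.ofReal p ^ (Finset.image g Finset.univ).card :=
        erdosRenyi_cylinder hp0 hp1 _
    _ = ENNReal.ofReal p ^ k := by
        rw [Finset.card_image_of_injective _ hg, Finset.card_univ, Fintype.card_fin]

/-- Finset of candidate path vertex sequences of length k from v to y -/
noncomputable def pathF (n : ℕ) (v y : Fin n) (k : ℕ) : Finset (Fin (k + 1) → Fin n) :=
  Finset.univ.filter (fun f => Function.Injective f ∧ f 0 = v ∧ f (Fin.last k) = y)

private lemma list_get_zero_of_cons {α : Type*} {l : List α} {a : α}
    (hc : l = a :: l.tail) (h : 0 < l.length) : l.get ⟨0, h⟩ = a := by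
  cases l with
  | nil => simp at h
  | cons b t =>
    show b = a
    injection hc

lemma reach_subset {n : ℕ} (v y : Fin n) :
    {x : EdgeIdx n → Bool | (graphOf x).Reachable v y} ⊆
      ⋃ (k : Fin n), ⋃ f ∈ pathF n v y k,
        {x | ∀ i : Fin (k : ℕ), (graphOf x).Adj (f i.castSucc) (f i.succ)} := by
  intro x hx
  simp only [Set.mem_setOf_eq] at hx
  obtain ⟨w⟩ := hx
  have hpath : w.bypass.IsPath := SimpleGraph.Walk.bypass_isPath w
  have hnd : w.bypass.support.Nodup := hpath.support_nodup
  obtain ⟨k, hlk⟩ : ∃ k, w.bypass.support.length = k + 1 :=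
    ⟨w.bypass.length, SimpleGraph.Walk.length_support w.bypass⟩
  have hklt : k < n := by
    have hle := List.Nodup.length_le_card hnd
    simp only [Fintype.card_fin] at hle
    omega
  have hcons : w.bypass.support = v :: w.bypass.support.tail :=
    SimpleGraph.Walk.support_eq_cons w.bypass
  set f : Fin (k + 1) → Fin n := fun i => w.bypass.support.get (Fin.cast hlk.symm i)
    with hf_def
  have hfi : Function.Injective f :=
    (List.nodup_iff_injective_get.mp hnd).comp (Fin.cast_injective _)
  have hf0 : f 0 = v := by
    have h0 : f 0 = w.bypass.support.get ⟨0, by omega⟩ := rfl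
    rw [h0]
    exact list_get_zero_of_cons hcons _
  have hlne : w.bypass.support ≠ [] := by
    intro h; rw [h] at hlk; simp at hlk
  have hflast : f (Fin.last k) = y := by
    have h1 : w.bypass.support.getLast hlne = y := SimpleGraph.Walk.getLast_support w.bypass
    rw [List.getLast_eq_getElem] at h1
    have h2 : f (Fin.last k) = w.bypass.support.get ⟨k, by omega⟩ := rfl
    have h3 : (⟨k, by omega⟩ : Fin w.bypass.support.length)
        = ⟨w.bypass.support.length - 1, by omega⟩ := by
      simp [Fin.ext_iff, hlk]
    rw [h2, h3]
    exact h1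
  have hchain : List.Chain' (graphOf x).Adj w.bypass.support :=
    SimpleGraph.Walk.isChain_adj_support w.bypass
  have hadj : ∀ i : Fin k, (graphOf x).Adj (f i.castSucc) (f i.succ) := by
    intro i
    have hi : (i : ℕ) < w.bypass.support.length - 1 := by omega
    have hc := List.isChain_iff_getElem.mp hchain i (by omega)
    have e1 : f i.castSucc = w.bypass.support.get ⟨i, by omega⟩ := rfl
    have e2 : f i.succ = w.bypass.support.get ⟨i + 1, by omega⟩ := rfl
    rw [e1, e2]
    exact hc
  refine Set.mem_iUnion.mpr ⟨⟨k, hklt⟩, Set.mem_iUnion.mpr ⟨f, ?_⟩⟩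
  refine Set.mem_iUnion.mpr ⟨?_, hadj⟩
  simp only [pathF, Finset.mem_filter, Finset.mem_univ, true_and]
  exact ⟨hfi, hf0, hflast⟩

lemma card_inj_le {n k : ℕ} (v : Fin n) :
    (Finset.univ.filter
      (fun f : Fin (k + 1) → Fin n => Function.Injective f ∧ f 0 = v)).card ≤ n ^ k := by
  classical
  have h : (Finset.univ.filter
      (fun f : Fin (k + 1) → Fin n => Function.Injective f ∧ f 0 = v)).card
      ≤ (Finset.univ : Finset (Fin k → Fin n)).card := by
    apply Finset.card_le_card_of_injOn (fun f => f ∘ Fin.succ)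
    · intro f _; exact Finset.mem_univ _
    · intro f hf g hg hfg
      simp only [Finset.coe_filter, Set.mem_setOf_eq, Finset.mem_univ, true_and] at hf hg
      funext i
      refine Fin.cases ?_ ?_ i
      · rw [hf.2, hg.2]
      · intro j
        exact congrFun hfg j
  simpa [Finset.card_univ] using h

lemma compSize_eq_sum {n : ℕ} (G : SimpleGraph (Fin n)) (v : Fin n) :
    compSize G v = ∑ y : Fin n, if G.Reachable v y then 1 else 0 := by
  classical
  rw [compSize, Nat.card_eq_fintype_card, Fintype.card_subtype]
  rw [Finset.card_filter]

end Aux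

theorem stmt6
    (c : ℝ) (hc0 : 0 < c) (hc1 : c < 1) (n : ℕ) (hn : 2 ≤ n) :
    ∫ x, (compSize (graphOf x) ⟨0, by omega⟩ : ℝ) ∂(erdosRenyi n (c / n)) ≤ 1 / (1 - c) := by
  classical
  set p : ℝ := c / n with hp_def
  have hn0 : (0 : ℝ) < n := by positivity
  have hp0 : 0 ≤ p := by positivity
  have hp1 : p ≤ 1 := by
    rw [hp_def, div_le_one hn0]
    have h1 : (1:ℝ) ≤ n := by exact_mod_cast Nat.one_le_of_lt hn
    linarith
  set v : Fin n := ⟨0, by omega⟩ with hv_def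
  set μ := erdosRenyi n p with hμ_def
  have hmeas : Measurable (fun x : EdgeIdx n → Bool => (compSize (graphOf x) v : ℝ)) :=
    measurable_of_countable _
  rw [integral_eq_lintegral_of_nonneg_ae (ae_of_all _ fun x => by positivity)
    hmeas.aestronglyMeasurable]
  have hc1' : 0 < 1 - c := by linarith
  have key : (∫⁻ x, ENNReal.ofReal ((compSize (graphOf x) v : ℝ)) ∂μ)
      ≤ ENNReal.ofReal (1 / (1 - c)) := by
    have step1 : (∫⁻ x, ENNReal.ofReal ((compSize (graphOf x) v : ℝ)) ∂μ)
        = ∑ y : Fin n, μ {x | (graphOf x).Reachable v y} := by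
      have h1 : ∀ x : EdgeIdx n → Bool,
          ENNReal.ofReal ((compSize (graphOf x) v : ℝ))
            = ∑ y : Fin n, Set.indicator {x | (graphOf x).Reachable v y} (fun _ => 1) x := by
        intro x
        rw [ENNReal.ofReal_natCast, compSize_eq_sum]
        push_cast
        congr 1
        funext y
        rw [Set.indicator_apply]
        simp [Set.mem_setOf_eq]
      simp only [h1]
      rw [lintegral_finset_sum]
      · congr 1
        funext y
        exact lintegral_indicator_one (Set.toFinite _).measurableSet
      · intro y _
        exact measurable_of_countable _
    rw [step1]
    have step2 : ∀ y : Fin n, μ {x | (graphOf x).Reachable v y}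
        ≤ ∑ k : Fin n, ∑ f ∈ pathF n v y k, ENNReal.ofReal p ^ (k : ℕ) := by
      intro y
      calc μ {x | (graphOf x).Reachable v y}
          ≤ μ (⋃ (k : Fin n), ⋃ f ∈ pathF n v y k,
              {x | ∀ i : Fin (k : ℕ), (graphOf x).Adj (f i.castSucc) (f i.succ)}) :=
            measure_mono (reach_subset v y)
        _ ≤ ∑ k : Fin n, μ (⋃ f ∈ pathF n v y k,
              {x | ∀ i : Fin (k : ℕ), (graphOf x).Adj (f i.castSucc) (f i.succ)}) := by
            refine le_trans (measure_iUnion_le _) ?_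
            rw [tsum_fintype]
        _ ≤ ∑ k : Fin n, ∑ f ∈ pathF n v y k,
              μ {x | ∀ i : Fin (k : ℕ), (graphOf x).Adj (f i.castSucc) (f i.succ)} := by
            refine Finset.sum_le_sum fun k _ => ?_
            exact measure_biUnion_finset_le _ _
        _ ≤ ∑ k : Fin n, ∑ f ∈ pathF n v y k, ENNReal.ofReal p ^ (k : ℕ) := by
            refine Finset.sum_le_sum fun k _ => Finset.sum_le_sum fun f hf => ?_
            simp only [pathF, Finset.mem_filter] at hf
            exact chain_measure hp0 hp1 f hf.2.1
    have hcount : ∀ k : Fin n,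
        ∑ y : Fin n, ∑ f ∈ pathF n v y (k : ℕ), ENNReal.ofReal p ^ (k : ℕ)
          ≤ (n : ℝ≥0∞) ^ (k : ℕ) * ENNReal.ofReal p ^ (k : ℕ) := by
      intro k
      set G : Finset (Fin ((k : ℕ) + 1) → Fin n) :=
        Finset.univ.filter (fun f => Function.Injective f ∧ f 0 = v) with hG_def
      have hfib : ∀ y : Fin n, pathF n v y (k : ℕ)
          = G.filter (fun f => f (Fin.last (k : ℕ)) = y) := by
        intro y
        rw [pathF, hG_def, Finset.filter_filter]
        congr 1
        funext f
        simp [and_assoc]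
      have hsum : ∑ y : Fin n, (pathF n v y (k : ℕ)).card = G.card := by
        rw [eq_comm]
        rw [Finset.card_eq_sum_card_fiberwise
          (f := fun f => f (Fin.last (k : ℕ))) (t := Finset.univ) (fun f _ => Finset.mem_univ _)]
        exact Finset.sum_congr rfl fun y _ => by rw [hfib y]
      calc ∑ y : Fin n, ∑ f ∈ pathF n v y (k : ℕ), ENNReal.ofReal p ^ (k : ℕ)
          = ∑ y : Fin n, ((pathF n v y (k : ℕ)).card : ℝ≥0∞) * ENNReal.ofReal p ^ (k : ℕ) := by
            refine Finset.sum_congr rfl fun y _ => ?_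
            rw [Finset.sum_const, nsmul_eq_mul]
        _ = ((∑ y : Fin n, (pathF n v y (k : ℕ)).card : ℕ) : ℝ≥0∞)
              * ENNReal.ofReal p ^ (k : ℕ) := by
            rw [← Finset.sum_mul]
            push_cast
            ring
        _ ≤ (n : ℝ≥0∞) ^ (k : ℕ) * ENNReal.ofReal p ^ (k : ℕ) := by
            refine mul_le_mul_left ?_ _
            rw [hsum]
            calc (G.card : ℝ≥0∞) ≤ ((n ^ (k : ℕ) : ℕ) : ℝ≥0∞) :=
                  Nat.cast_le.mpr (card_inj_le v)
              _ = (n : ℝ≥0∞) ^ (k : ℕ) := by push_cast; ring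
    have hnp : (n : ℝ≥0∞) * ENNReal.ofReal p = ENNReal.ofReal c := by
      rw [← ENNReal.ofReal_natCast n, ← ENNReal.ofReal_mul (by positivity)]
      congr 1
      rw [hp_def]
      field_simp
    calc ∑ y : Fin n, μ {x | (graphOf x).Reachable v y}
        ≤ ∑ y : Fin n, ∑ k : Fin n, ∑ f ∈ pathF n v y (k : ℕ), ENNReal.ofReal p ^ (k : ℕ) :=
          Finset.sum_le_sum fun y _ => step2 y
      _ = ∑ k : Fin n, ∑ y : Fin n, ∑ f ∈ pathF n v y (k : ℕ), ENNReal.ofReal p ^ (k : ℕ) :=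
          Finset.sum_comm
      _ ≤ ∑ k : Fin n, (n : ℝ≥0∞) ^ (k : ℕ) * ENNReal.ofReal p ^ (k : ℕ) :=
          Finset.sum_le_sum fun k _ => hcount k
      _ = ∑ k : Fin n, (ENNReal.ofReal c) ^ (k : ℕ) := by
          refine Finset.sum_congr rfl fun k _ => ?_
          rw [← mul_pow, hnp]
      _ = ∑ k ∈ Finset.range n, (ENNReal.ofReal c) ^ k := Fin.sum_univ_eq_sum_range _ n
      _ ≤ ∑' k : ℕ, (ENNReal.ofReal c) ^ k := ENNReal.sum_le_tsum _
      _ = (1 - ENNReal.ofReal c)⁻¹ := ENNReal.tsum_geometric _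
      _ = ENNReal.ofReal (1 / (1 - c)) := by
          rw [← ENNReal.ofReal_one, ← ENNReal.ofReal_sub _ hc0.le]
          rw [one_div, ENNReal.ofReal_inv_of_pos hc1']
  calc (∫⁻ x, ENNReal.ofReal ((compSize (graphOf x) v : ℝ)) ∂μ).toReal
      ≤ (ENNReal.ofReal (1 / (1 - c))).toReal :=
        ENNReal.toReal_mono ENNReal.ofReal_ne_top key
    _ = 1 / (1 - c) := ENNReal.toReal_ofReal (by positivity)
end

section
/- For every c with 0 < c ≤ 1, g(c) = 1 − c/2; equivalently, Σ_{k=1}^∞ (k^{k−2}/k!)·(c e^{−c})^k = c − c²/2, so that u(c) = c/2 in the subcritical and critical regime. -/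
open Finset Filter Topology
open scoped ENNReal NNReal

namespace Stmt14Aux

/-- coefficients `k^(k-2)/k!`, zero at `k = 0`. -/
noncomputable def aa : ℕ → ℝ := fun k =>
  if k = 0 then 0 else ((k ^ (k - 2) : ℕ) : ℝ) / (k.factorial : ℝ)

lemma aa_zero : aa 0 = 0 := rfl

lemma aa_succ (k : ℕ) :
    aa (k + 1) = (((k + 1) ^ (k - 1) : ℕ) : ℝ) / ((k + 1).factorial : ℝ) := by
  have h : k + 1 - 2 = k - 1 := by omega
  simp [aa, h]

lemma aa_nonneg (k : ℕ) : 0 ≤ aa k := by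
  unfold aa; split
  · exact le_rfl
  · positivity

lemma pow_le_factorial_mul_exp (n : ℕ) :
    (n : ℝ) ^ n ≤ (n.factorial : ℝ) * Real.exp 1 ^ n := by
  have h := Real.sum_le_exp_of_nonneg (x := (n : ℝ)) n.cast_nonneg (n + 1)
  have h2 : (n : ℝ) ^ n / (n.factorial : ℝ) ≤ Real.exp n := by
    refine le_trans ?_ h
    exact Finset.single_le_sum (f := fun i => (n : ℝ) ^ i / (i.factorial : ℝ))
      (fun i _ => by positivity) (Finset.self_mem_range_succ n)
  have h3 : Real.exp (n : ℝ) = Real.exp 1 ^ n := by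
    rw [← Real.exp_nat_mul]; norm_num
  rw [h3] at h2
  have hf : (0 : ℝ) < (n.factorial : ℝ) := by exact_mod_cast n.factorial_pos
  calc (n : ℝ) ^ n = ((n : ℝ) ^ n / (n.factorial : ℝ)) * (n.factorial : ℝ) := by
        field_simp
    _ ≤ Real.exp 1 ^ n * (n.factorial : ℝ) := by
        exact mul_le_mul_of_nonneg_right h2 hf.le
    _ = (n.factorial : ℝ) * Real.exp 1 ^ n := by ring

lemma aa_mul_exp_le (n : ℕ) : aa n * Real.exp (-1) ^ n ≤ (((n : ℝ)) ^ 2)⁻¹ := by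
  match n with
  | 0 => simp [aa_zero]
  | 1 =>
      have : aa 1 = 1 := by norm_num [aa]
      rw [this]
      simp only [pow_one, one_mul, Nat.cast_one, one_pow, inv_one]
      have := Real.exp_lt_exp (x := (-1:ℝ)) (y := 0)
      nlinarith [Real.exp_pos (-1:ℝ), Real.exp_lt_exp.mpr (show (-1:ℝ) < 0 by norm_num), Real.exp_zero]
  | (m + 2) =>
      set n := m + 2 with hn
      have hfp : (0:ℝ) < (n.factorial : ℝ) := by exact_mod_cast n.factorial_pos
      have hnp : (0:ℝ) < (n:ℝ) := by positivity
      have haa : aa n = (n:ℝ) ^ (n - 2) / (n.factorial : ℝ) := by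
        simp [aa, hn]
      have hpow : (n:ℝ) ^ (n - 2) * (n:ℝ) ^ 2 = (n:ℝ) ^ n := by
        have : n - 2 + 2 = n := by omega
        rw [← pow_add, this]
      have hkey := pow_le_factorial_mul_exp n
      have hexp : Real.exp (-1) ^ n * Real.exp 1 ^ n = 1 := by
        rw [← mul_pow, ← Real.exp_add]; norm_num
      have hEp : (0:ℝ) < Real.exp 1 ^ n := by positivity
      have hEm : (0:ℝ) < Real.exp (-1) ^ n := by positivity
      rw [haa]
      rw [div_mul_eq_mul_div, div_le_iff₀ hfp]
      -- (n:ℝ)^(n-2) * exp(-1)^n ≤ (n^2)⁻¹ * n!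
      have h1 : (n:ℝ) ^ (n - 2) = (n:ℝ) ^ n / (n:ℝ) ^ 2 := by
        field_simp [← hpow]; exact hpow
      rw [h1]
      rw [div_mul_eq_mul_div, div_le_iff₀ (by positivity : (0:ℝ) < (n:ℝ)^2)]
      -- n^n * exp(-1)^n ≤ (n^2)⁻¹ * n! * n^2
      have h2 : ((n:ℝ)^2)⁻¹ * (n.factorial:ℝ) * (n:ℝ)^2 = (n.factorial:ℝ) := by
        field_simp
      rw [h2]
      calc (n:ℝ) ^ n * Real.exp (-1) ^ n
          ≤ (n.factorial : ℝ) * Real.exp 1 ^ n * Real.exp (-1) ^ n := by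
            exact mul_le_mul_of_nonneg_right hkey hEm.le
        _ = (n.factorial : ℝ) * (Real.exp (-1) ^ n * Real.exp 1 ^ n) := by ring
        _ = (n.factorial : ℝ) := by rw [hexp, mul_one]

lemma aa_mul_exp_le_one (n : ℕ) : aa n * Real.exp (-1) ^ n ≤ 1 := by
  rcases Nat.eq_zero_or_pos n with h | h
  · subst h; simp [aa_zero]
  · refine le_trans (aa_mul_exp_le n) ?_
    have : (1:ℝ) ≤ (n:ℝ) ^ 2 := by
      have : (1:ℝ) ≤ (n:ℝ) := by exact_mod_cast h
      nlinarith
    exact inv_le_one_of_one_le₀ this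

lemma aa_le_exp (n : ℕ) : aa n ≤ Real.exp 1 ^ n := by
  have h := aa_mul_exp_le_one n
  have hexp : Real.exp (-1) ^ n * Real.exp 1 ^ n = 1 := by
    rw [← mul_pow, ← Real.exp_add]; norm_num
  have hEp : (0:ℝ) < Real.exp 1 ^ n := by positivity
  calc aa n = aa n * (Real.exp (-1) ^ n * Real.exp 1 ^ n) := by rw [hexp, mul_one]
    _ = (aa n * Real.exp (-1) ^ n) * Real.exp 1 ^ n := by ring
    _ ≤ 1 * Real.exp 1 ^ n := mul_le_mul_of_nonneg_right h hEp.le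
    _ = Real.exp 1 ^ n := one_mul _

lemma summable_inv_sq : Summable (fun n : ℕ => (((n : ℝ)) ^ 2)⁻¹) := by
  have := (Real.summable_one_div_nat_pow (p := 2)).mpr (by norm_num)
  simpa [one_div] using this

lemma summable_aa {x : ℝ} (hx : |x| ≤ Real.exp (-1)) :
    Summable (fun k : ℕ => aa k * x ^ k) := by
  apply Summable.of_norm_bounded summable_inv_sq
  intro k
  have h1 : ‖aa k * x ^ k‖ = aa k * |x| ^ k := by
    rw [norm_mul, Real.norm_eq_abs, Real.norm_eq_abs, abs_of_nonneg (aa_nonneg k), abs_pow]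
  rw [h1]
  calc aa k * |x| ^ k ≤ aa k * Real.exp (-1) ^ k := by
        exact mul_le_mul_of_nonneg_left (pow_le_pow_left₀ (abs_nonneg x) hx k) (aa_nonneg k)
    _ ≤ (((k : ℝ)) ^ 2)⁻¹ := aa_mul_exp_le k

/-- The function `S x = ∑ aa k x^k`. -/
noncomputable def S : ℝ → ℝ := fun x => ∑' k : ℕ, aa k * x ^ k

lemma S_analyticAt {x : ℝ} (hx : |x| < Real.exp (-1)) : AnalyticAt ℝ S x := by
  set p := FormalMultilinearSeries.ofScalars ℝ aa with hp
  have hrad : ((Real.exp (-1)).toNNReal : ℝ≥0∞) ≤ p.radius := by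
    apply FormalMultilinearSeries.le_radius_of_bound _ 1
    intro n
    rw [FormalMultilinearSeries.ofScalars_norm]
    have hco : (((Real.exp (-1)).toNNReal : ℝ≥0) : ℝ) = Real.exp (-1) :=
      Real.coe_toNNReal _ (Real.exp_pos _).le
    rw [hco, Real.norm_eq_abs, abs_of_nonneg (aa_nonneg n)]
    exact aa_mul_exp_le_one n
  have hpos : 0 < p.radius := by
    refine lt_of_lt_of_le ?_ hrad
    simp [Real.toNNReal_pos.mpr (Real.exp_pos (-1))]
  have hball := p.hasFPowerSeriesOnBall hpos
  have hSsum : S = p.sum := by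
    funext y
    unfold S FormalMultilinearSeries.sum
    refine tsum_congr fun n => ?_
    rw [hp, FormalMultilinearSeries.ofScalars_apply_eq, smul_eq_mul]
  rw [hSsum]
  apply hball.analyticOnNhd
  refine EMetric.mem_ball.mpr ?_
  have hdist : edist x 0 = ((|x|).toNNReal : ℝ≥0∞) := by
    rw [edist_dist, Real.dist_eq, sub_zero, ENNReal.ofReal]
  rw [hdist]
  refine lt_of_lt_of_le ?_ hrad
  have : (|x|).toNNReal < (Real.exp (-1)).toNNReal :=
    (Real.toNNReal_lt_toNNReal_iff (Real.exp_pos _)).mpr hx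
  exact_mod_cast this

lemma exp_five_lt : Real.exp (5/4) < 4 := by
  have h9 := Real.exp_one_lt_d9
  have h5 : Real.exp 1 ^ 5 < 2.7182818286 ^ 5 :=
    pow_lt_pow_left₀ h9 (Real.exp_pos 1).le (by norm_num)
  have h5' : Real.exp (5/4) ^ 4 < 256 := by
    have : Real.exp (5/4) ^ 4 = Real.exp 1 ^ 5 := by
      rw [← Real.exp_nat_mul, ← Real.exp_nat_mul]; norm_num
    rw [this]
    calc Real.exp 1 ^ 5 < 2.7182818286 ^ 5 := h5
      _ < 256 := by norm_num
  have : Real.exp (5/4) ^ 4 < 4 ^ 4 := by norm_num at h5' ⊢; linarith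
  exact lt_of_pow_lt_pow_left₀ 4 (by norm_num) this

lemma quarter_exp_lt : (4:ℝ)⁻¹ * Real.exp 4⁻¹ < Real.exp (-1) := by
  have hE : Real.exp (4⁻¹ : ℝ) * Real.exp 1 = Real.exp (5/4) := by
    rw [← Real.exp_add]; norm_num
  have h1 : Real.exp (-1) * Real.exp 1 = 1 := by rw [← Real.exp_add]; norm_num
  nlinarith [exp_five_lt, Real.exp_pos (1:ℝ), Real.exp_pos (-1:ℝ), Real.exp_pos (4⁻¹:ℝ)]

lemma phi_lt {c : ℝ} (hc : c ∈ Set.Ioo (-(4:ℝ)⁻¹) 1) :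
    |c * Real.exp (-c)| < Real.exp (-1) := by
  rcases le_or_gt c 0 with h | h
  · rw [abs_mul, abs_of_pos (Real.exp_pos _)]
    have h1 : |c| < 4⁻¹ := abs_lt.mpr ⟨hc.1, lt_of_le_of_lt h (by norm_num)⟩
    have h2 : Real.exp (-c) ≤ Real.exp 4⁻¹ := by
      apply Real.exp_le_exp.mpr
      have := hc.1; linarith
    calc |c| * Real.exp (-c) ≤ |c| * Real.exp 4⁻¹ :=
          mul_le_mul_of_nonneg_left h2 (abs_nonneg c)
      _ < 4⁻¹ * Real.exp 4⁻¹ := by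
          exact mul_lt_mul_of_pos_right h1 (Real.exp_pos _)
      _ < Real.exp (-1) := quarter_exp_lt
  · have h0 : 0 < c * Real.exp (-c) := by positivity
    rw [abs_of_pos h0]
    have hlog : Real.log c < c - 1 := Real.log_lt_sub_one_of_pos h (ne_of_lt hc.2)
    have hrw : c * Real.exp (-c) = Real.exp (Real.log c + -c) := by
      rw [Real.exp_add, Real.exp_log h]
    rw [hrw]
    exact Real.exp_lt_exp.mpr (by linarith)

lemma phi_le {c : ℝ} (hc0 : 0 < c) (hc1 : c ≤ 1) :
    |c * Real.exp (-c)| ≤ Real.exp (-1) := by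
  have h0 : 0 < c * Real.exp (-c) := by positivity
  rw [abs_of_pos h0]
  have hlog : Real.log c ≤ c - 1 := Real.log_le_sub_one_of_pos hc0
  have hrw : c * Real.exp (-c) = Real.exp (Real.log c + -c) := by
    rw [Real.exp_add, Real.exp_log hc0]
  rw [hrw]
  apply Real.exp_le_exp.mpr
  linarith
lemma alt_sum : ∀ n d : ℕ, d < n →
    ∑ k ∈ range (n + 1), (-1 : ℝ) ^ k * (n.choose k : ℝ) * (k : ℝ) ^ d = 0 := by
  intro n
  induction n with
  | zero => intro d hd; omega
  | succ n ih =>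
    intro d hd
    match d with
    | 0 =>
      have h := Int.alternating_sum_range_choose (n := n + 1)
      rw [if_neg (Nat.succ_ne_zero n)] at h
      have h2 : ((∑ i ∈ range (n + 2), (-1 : ℤ) ^ i * ((n + 1).choose i : ℤ) : ℤ) : ℝ) = 0 := by
        rw [h]; norm_num
      push_cast at h2
      simpa using h2
    | (e + 1) =>
      have he : e < n := by omega
      rw [Finset.sum_range_succ']
      have hz : (-1 : ℝ) ^ 0 * ((n + 1).choose 0 : ℝ) * ((0 : ℕ) : ℝ) ^ (e + 1) = 0 := by
        simp
      rw [hz, add_zero]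
      have hterm : ∀ i : ℕ, (-1 : ℝ) ^ (i + 1) * ((n + 1).choose (i + 1) : ℝ) * ((i + 1 : ℕ) : ℝ) ^ (e + 1)
          = (-((n : ℝ) + 1)) * ((-1 : ℝ) ^ i * (n.choose i : ℝ) * ((i : ℝ) + 1) ^ e) := by
        intro i
        have hc : ((n + 1 : ℕ) : ℝ) * (n.choose i : ℝ) = (((n + 1).choose (i + 1) : ℕ) : ℝ) * ((i + 1 : ℕ) : ℝ) := by
          exact_mod_cast congrArg (Nat.cast : ℕ → ℝ) (Nat.add_one_mul_choose_eq n i)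
        push_cast at hc ⊢
        rw [pow_succ (-1 : ℝ) i, pow_succ ((i : ℝ) + 1) e]
        linear_combination ((-1:ℝ) ^ i * ((i:ℝ) + 1) ^ e) * hc
      rw [Finset.sum_congr rfl (fun i _ => hterm i), ← Finset.mul_sum]
      have hexp : ∀ i : ℕ, ((i : ℝ) + 1) ^ e = ∑ j ∈ range (e + 1), (i : ℝ) ^ j * (e.choose j : ℝ) := by
        intro i
        rw [add_pow]
        refine Finset.sum_congr rfl fun j _ => ?_
        rw [one_pow]; ring
      have hmain : ∑ i ∈ range (n + 1), (-1 : ℝ) ^ i * (n.choose i : ℝ) * ((i : ℝ) + 1) ^ e = 0 := by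
        calc ∑ i ∈ range (n + 1), (-1 : ℝ) ^ i * (n.choose i : ℝ) * ((i : ℝ) + 1) ^ e
            = ∑ i ∈ range (n + 1), ∑ j ∈ range (e + 1),
                (e.choose j : ℝ) * ((-1 : ℝ) ^ i * (n.choose i : ℝ) * (i : ℝ) ^ j) := by
              refine Finset.sum_congr rfl fun i _ => ?_
              rw [hexp i, Finset.mul_sum]
              refine Finset.sum_congr rfl fun j _ => ?_
              ring
          _ = ∑ j ∈ range (e + 1), (e.choose j : ℝ) *
                ∑ i ∈ range (n + 1), (-1 : ℝ) ^ i * (n.choose i : ℝ) * (i : ℝ) ^ j := by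
              rw [Finset.sum_comm]
              refine Finset.sum_congr rfl fun j _ => ?_
              rw [Finset.mul_sum]
          _ = 0 := by
              refine Finset.sum_eq_zero fun j hj => ?_
              rw [mem_range] at hj
              rw [ih j (by omega), mul_zero]
      rw [hmain, mul_zero]

lemma coef_zero {n : ℕ} (hn : 3 ≤ n) :
    ∑ k ∈ range (n + 1), aa k * (-(k : ℝ)) ^ (n - k) / (((n - k).factorial : ℕ) : ℝ) = 0 := by
  have key := alt_sum n (n - 2) (by omega)
  have hterm : ∀ k ∈ range (n + 1),
      aa k * (-(k : ℝ)) ^ (n - k) / (((n - k).factorial : ℕ) : ℝ)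
      = ((-1 : ℝ) ^ n / (n.factorial : ℝ)) * ((-1 : ℝ) ^ k * (n.choose k : ℝ) * (k : ℝ) ^ (n - 2)) := by
    intro k hk
    rw [mem_range] at hk
    have hkn : k ≤ n := by omega
    match k, hkn with
    | 0, _ =>
      have : ((0 : ℕ) : ℝ) ^ (n - 2) = 0 := by
        rw [Nat.cast_zero]
        exact zero_pow (by omega)
      simp [aa_zero, this]
      exact Or.inr (by omega)
    | (k' + 1), hkn =>
      set k := k' + 1 with hkdef
      have hk1 : 1 ≤ k := by omega
      have haak : aa k = (k : ℝ) ^ (k - 2) / (k.factorial : ℝ) := by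
        simp [aa, hkdef, Nat.cast_pow]
      have hpow : (k : ℝ) ^ (k - 2) * (k : ℝ) ^ (n - k) = (k : ℝ) ^ (n - 2) := by
        rcases Nat.lt_or_ge k 2 with h2 | h2
        · have hk0 : k' = 0 := by omega
          subst hk0
          norm_num
        · rw [← pow_add]
          congr 1
          omega
      have hsign : (-1 : ℝ) ^ (n - k) * (-1 : ℝ) ^ k = (-1 : ℝ) ^ n := by
        rw [← pow_add]
        congr 1
        omega
      have hsq : ((-1 : ℝ) ^ k) * ((-1 : ℝ) ^ k) = 1 := by
        rw [← pow_add, Even.neg_one_pow ⟨k, rfl⟩]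
      have hfac : ((n.choose k : ℕ) : ℝ) * (k.factorial : ℝ) * ((n - k).factorial : ℝ) = (n.factorial : ℝ) := by
        exact_mod_cast congrArg (Nat.cast : ℕ → ℝ) (Nat.choose_mul_factorial_mul_factorial hkn)
      have hneg : (-(k : ℝ)) ^ (n - k) = (-1 : ℝ) ^ (n - k) * (k : ℝ) ^ (n - k) := by
        rw [← neg_one_mul, mul_pow]
      have hkfp : (0 : ℝ) < (k.factorial : ℝ) := by exact_mod_cast k.factorial_pos
      have hnkfp : (0 : ℝ) < ((n - k).factorial : ℝ) := by exact_mod_cast (n - k).factorial_pos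
      have hnfp : (0 : ℝ) < (n.factorial : ℝ) := by exact_mod_cast n.factorial_pos
      rw [haak, hneg]
      field_simp
      suffices hs : (k : ℝ) ^ (k - 2) * ((-1 : ℝ) ^ (n - k) * (k : ℝ) ^ (n - k)) * (n.factorial : ℝ)
          = (-1 : ℝ) ^ n * ((-1 : ℝ) ^ k * (n.choose k : ℝ) * (k : ℝ) ^ (n - 2)) * ((k.factorial : ℝ) * ((n - k).factorial : ℝ)) by
        linear_combination hs
      calc (k : ℝ) ^ (k - 2) * ((-1 : ℝ) ^ (n - k) * (k : ℝ) ^ (n - k)) * (n.factorial : ℝ)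
          = ((k : ℝ) ^ (k - 2) * (k : ℝ) ^ (n - k)) * (-1 : ℝ) ^ (n - k) * (n.factorial : ℝ) := by ring
        _ = (k : ℝ) ^ (n - 2) * (-1 : ℝ) ^ (n - k) * (n.factorial : ℝ) := by rw [hpow]
        _ = (-1 : ℝ) ^ n * ((-1 : ℝ) ^ k * (n.choose k : ℝ) * (k : ℝ) ^ (n - 2)) * ((k.factorial : ℝ) * ((n - k).factorial : ℝ)) := by
            rw [← hsign, ← hfac]
            have hsq2 : ((-1:ℝ)) ^ (k' * 2) = 1 := by
              rw [mul_comm, pow_mul]; norm_num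
            linear_combination (-((k:ℝ) ^ (n - 2) * (n.choose k : ℝ) * (k.factorial:ℝ) * ((n - k).factorial:ℝ) * (-1:ℝ) ^ (n - k))) * hsq2
  rw [Finset.sum_congr rfl hterm, ← Finset.mul_sum, key, mul_zero]
lemma exp_tsum (x : ℝ) : ∑' m : ℕ, x ^ m / (m.factorial : ℝ) = Real.exp x := by
  rw [Real.exp_eq_exp_ℝ, NormedSpace.exp_eq_tsum_div]

set_option maxHeartbeats 1000000 in
lemma key_local {c : ℝ} (hc : |c| < 4⁻¹) :
    S (c * Real.exp (-c)) = c - c ^ 2 / 2 := by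
  classical
  set f2 : ℕ × ℕ → ℝ :=
    fun km => aa km.1 * c ^ km.1 * ((-(c * km.1)) ^ km.2 / (km.2.factorial : ℝ)) with hf2
  -- the geometric ratio
  have hq : Real.exp 1 * |c| * Real.exp |c| < 1 := by
    have h1 : Real.exp |c| ≤ Real.exp 4⁻¹ := Real.exp_le_exp.mpr hc.le
    have h2 : Real.exp 1 * Real.exp (4⁻¹:ℝ) = Real.exp (5/4) := by
      rw [← Real.exp_add]; norm_num
    nlinarith [exp_five_lt, Real.exp_pos (1:ℝ), Real.exp_pos (4⁻¹:ℝ), Real.exp_pos |c|,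
      abs_nonneg c, mul_le_mul_of_nonneg_left h1 (Real.exp_pos (1:ℝ)).le]
  -- the dominating function
  have hg2 : Summable (fun km : ℕ × ℕ =>
      (Real.exp 1 * |c|) ^ km.1 * (((km.1 : ℝ) * |c|) ^ km.2 / (km.2.factorial : ℝ))) := by
    refine (summable_prod_of_nonneg ?_).mpr ⟨?_, ?_⟩
    · intro p; positivity
    · intro k
      show Summable fun m : ℕ => (Real.exp 1 * |c|) ^ k * (((k : ℝ) * |c|) ^ m / (m.factorial : ℝ))
      exact (Real.summable_pow_div_factorial ((k : ℝ) * |c|)).mul_left _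
    · have hrw : ∀ k : ℕ, ∑' m : ℕ, (Real.exp 1 * |c|) ^ k * (((k : ℝ) * |c|) ^ m / (m.factorial : ℝ))
          = (Real.exp 1 * |c| * Real.exp |c|) ^ k := by
        intro k
        rw [tsum_mul_left, exp_tsum ((k : ℝ) * |c|), Real.exp_nat_mul, ← mul_pow]
      refine Summable.congr ?_ (fun k => (hrw k).symm)
      exact summable_geometric_of_lt_one (by positivity) hq
  have hf2sum : Summable f2 := by
    apply Summable.of_norm_bounded hg2
    rintro ⟨k, m⟩
    have hnorm : ‖f2 (k, m)‖ = aa k * |c| ^ k * (((k : ℝ) * |c|) ^ m / (m.factorial : ℝ)) := by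
      simp only [hf2, norm_mul, norm_div, Real.norm_eq_abs, abs_pow, abs_neg, abs_mul,
        Nat.abs_cast, abs_of_nonneg (aa_nonneg k)]
      ring
    rw [hnorm]
    have h1 : aa k * |c| ^ k ≤ (Real.exp 1 * |c|) ^ k := by
      rw [mul_pow]
      exact mul_le_mul_of_nonneg_right (aa_le_exp k) (by positivity)
    exact mul_le_mul_of_nonneg_right h1 (by positivity)
  -- Step A : expand the exponential
  have hA : S (c * Real.exp (-c)) = ∑' k : ℕ, ∑' m : ℕ, f2 (k, m) := by
    unfold S
    refine tsum_congr fun k => ?_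
    rw [mul_pow, ← Real.exp_nat_mul, show (k : ℝ) * -c = -(c * k) by ring,
      ← exp_tsum (-(c * (k : ℝ))), ← tsum_mul_left, ← tsum_mul_left]
    refine tsum_congr fun m => ?_
    simp only [hf2]
    ring
  -- Step B : Fubini
  have hB : ∑' k : ℕ, ∑' m : ℕ, f2 (k, m) = ∑' p : ℕ × ℕ, f2 p :=
    (Summable.tsum_prod' hf2sum fun k => hf2sum.prod_factor k).symm
  -- Step C : group along antidiagonals
  have hC : ∑' p : ℕ × ℕ, f2 p = ∑' n : ℕ, ∑ kl ∈ Finset.HasAntidiagonal.antidiagonal n, f2 kl := by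
    have hsigma : Summable (fun x : (Σ n : ℕ, {p : ℕ × ℕ // p ∈ Finset.HasAntidiagonal.antidiagonal n}) =>
        f2 (Finset.HasAntidiagonal.sigmaAntidiagonalEquivProd x)) :=
      Finset.HasAntidiagonal.sigmaAntidiagonalEquivProd.summable_iff.mpr hf2sum
    calc ∑' p : ℕ × ℕ, f2 p
        = ∑' x : (Σ n : ℕ, {p : ℕ × ℕ // p ∈ Finset.HasAntidiagonal.antidiagonal n}),
            f2 (Finset.HasAntidiagonal.sigmaAntidiagonalEquivProd x) :=
          (Finset.HasAntidiagonal.sigmaAntidiagonalEquivProd.tsum_eq f2).symm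
      _ = ∑' n : ℕ, ∑' y : {p : ℕ × ℕ // p ∈ Finset.HasAntidiagonal.antidiagonal n},
            f2 (Finset.HasAntidiagonal.sigmaAntidiagonalEquivProd ⟨n, y⟩) :=
          Summable.tsum_sigma' (fun n => Summable.of_finite) hsigma
      _ = ∑' n : ℕ, ∑ kl ∈ Finset.HasAntidiagonal.antidiagonal n, f2 kl := by
          refine tsum_congr fun n => ?_
          rw [← Finset.tsum_subtype]
          refine tsum_congr fun y => ?_
          simp [Finset.HasAntidiagonal.sigmaAntidiagonalEquivProd]
  -- Step D : evaluate each antidiagonal sum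
  have hD : ∀ n : ℕ, ∑ kl ∈ Finset.HasAntidiagonal.antidiagonal n, f2 kl
      = (if n = 1 then c else if n = 2 then -(c ^ 2 / 2) else 0) := by
    intro n
    rw [Finset.Nat.sum_antidiagonal_eq_sum_range_succ_mk]
    match n with
    | 0 => simp [hf2, aa_zero]
    | 1 =>
      simp only [hf2]
      rw [Finset.sum_range_succ, Finset.sum_range_one]
      norm_num [aa_zero, aa]
    | 2 =>
      simp only [hf2]
      rw [Finset.sum_range_succ, Finset.sum_range_succ, Finset.sum_range_one]
      norm_num [aa_zero, aa]
      ring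
    | (m + 3) =>
      have hn3 : 3 ≤ m + 3 := by omega
      have hterm : ∀ k ∈ range (m + 3 + 1), f2 (k, m + 3 - k)
          = (aa k * (-(k : ℝ)) ^ (m + 3 - k) / (((m + 3 - k).factorial : ℕ) : ℝ)) * c ^ (m + 3) := by
        intro k hk
        rw [mem_range] at hk
        simp only [hf2]
        have h1 : (-(c * (k:ℝ))) ^ (m + 3 - k) = (-(k:ℝ)) ^ (m + 3 - k) * c ^ (m + 3 - k) := by
          rw [← mul_pow]; congr 1; ring
        rw [h1]
        have h2 : c ^ k * c ^ (m + 3 - k) = c ^ (m + 3) := by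
          rw [← pow_add]; congr 1; omega
        calc aa k * c ^ k * ((-(k:ℝ)) ^ (m + 3 - k) * c ^ (m + 3 - k) / ((m + 3 - k).factorial : ℝ))
            = (aa k * (-(k : ℝ)) ^ (m + 3 - k) / ((m + 3 - k).factorial : ℝ)) * (c ^ k * c ^ (m + 3 - k)) := by
              ring
          _ = (aa k * (-(k : ℝ)) ^ (m + 3 - k) / ((m + 3 - k).factorial : ℝ)) * c ^ (m + 3) := by
              rw [h2]
      rw [Finset.sum_congr rfl hterm, ← Finset.sum_mul, coef_zero hn3, zero_mul]
      simp
  -- Step E : sum the finitely many nonzero terms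
  rw [hA, hB, hC, tsum_congr hD]
  rw [tsum_eq_sum (s := ({1, 2} : Finset ℕ)) ?_]
  · norm_num
    ring
  · intro b hb
    simp only [Finset.mem_insert, Finset.mem_singleton] at hb
    push_neg at hb
    rw [if_neg hb.1, if_neg hb.2]
lemma phi_analyticAt (c : ℝ) : AnalyticAt ℝ (fun x : ℝ => x * Real.exp (-x)) c := by
  have h1 : AnalyticAt ℝ (fun x : ℝ => Real.exp (-x)) c := by
    have := (analyticAt_id (𝕜 := ℝ) (z := c)).neg
    exact analyticAt_rexp.comp (f := fun x : ℝ => -x) (g := Real.exp) this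
  exact (analyticAt_id (𝕜 := ℝ) (z := c)).mul h1

lemma key_lt {c : ℝ} (hc0 : 0 < c) (hc1 : c < 1) :
    S (c * Real.exp (-c)) = c - c ^ 2 / 2 := by
  set U : Set ℝ := Set.Ioo (-(4:ℝ)⁻¹) 1 with hU
  have hUconn : IsPreconnected U := (convex_Ioo _ _).isPreconnected
  have hF : AnalyticOnNhd ℝ (fun x => S (x * Real.exp (-x))) U := by
    intro x hx
    exact AnalyticAt.comp (g := S) (f := fun x : ℝ => x * Real.exp (-x))
      (S_analyticAt (phi_lt hx)) (phi_analyticAt x)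
  have hG : AnalyticOnNhd ℝ (fun x : ℝ => x - x ^ 2 / 2) U := by
    intro x hx
    refine (analyticAt_id (𝕜 := ℝ) (z := x)).sub ?_
    refine AnalyticAt.div ?_ analyticAt_const (by norm_num)
    exact (analyticAt_id (𝕜 := ℝ) (z := x)).pow 2
  have h0 : (0:ℝ) ∈ U := by constructor <;> norm_num
  have hev : (fun x => S (x * Real.exp (-x))) =ᶠ[𝓝 (0:ℝ)] fun x => x - x ^ 2 / 2 := by
    have hball : Metric.ball (0:ℝ) 4⁻¹ ∈ 𝓝 (0:ℝ) := Metric.ball_mem_nhds _ (by norm_num)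
    filter_upwards [hball] with x hx
    rw [Metric.mem_ball, Real.dist_eq, sub_zero] at hx
    exact key_local hx
  have heq := AnalyticOnNhd.eqOn_of_preconnected_of_eventuallyEq hF hG hUconn h0 hev
  exact heq ⟨by linarith, hc1⟩

lemma key {c : ℝ} (hc0 : 0 < c) (hc1 : c ≤ 1) :
    S (c * Real.exp (-c)) = c - c ^ 2 / 2 := by
  rcases lt_or_eq_of_le hc1 with h | h
  · exact key_lt hc0 h
  · subst h
    have hb : Summable (fun n : ℕ => aa n * Real.exp (-1) ^ n) := by
      have habs : |Real.exp (-1)| ≤ Real.exp (-1) := by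
        rw [abs_of_pos (Real.exp_pos _)]
      exact summable_aa habs
    have habel := Real.tendsto_tsum_powerSeries_nhdsWithin_lt
      (f := fun n => aa n * Real.exp (-1) ^ n) hb.hasSum.tendsto_sum_nat
    set ψ : ℝ → ℝ := fun x => x * Real.exp (1 - x) with hψdef
    have hψt : Tendsto ψ (𝓝[<] (1:ℝ)) (𝓝[<] (1:ℝ)) := by
      apply tendsto_nhdsWithin_of_tendsto_nhds_of_eventually_within
      · have hψc : ContinuousAt ψ 1 := by fun_prop
        have hψ1 : ψ 1 = 1 := by simp [hψdef]
        refine Tendsto.mono_left ?_ nhdsWithin_le_nhds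
        simpa [hψ1] using hψc.tendsto
      · filter_upwards [self_mem_nhdsWithin] with x hx
        have hx1 : x < 1 := hx
        show ψ x ∈ Set.Iio 1
        rcases le_or_gt x 0 with h0 | h0
        · have hψx : ψ x ≤ 0 := mul_nonpos_of_nonpos_of_nonneg h0 (Real.exp_pos _).le
          simp only [Set.mem_Iio]; linarith
        · have hlog : Real.log x < x - 1 := Real.log_lt_sub_one_of_pos h0 (ne_of_lt hx1)
          have hrw : ψ x = Real.exp (Real.log x + (1 - x)) := by
            rw [Real.exp_add, Real.exp_log h0]
          simp only [Set.mem_Iio, hrw]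
          rw [Real.exp_lt_one_iff]
          linarith
    have hcomp := habel.comp hψt
    have heq : ((fun y => ∑' n : ℕ, (aa n * Real.exp (-1) ^ n) * y ^ n) ∘ ψ)
        =ᶠ[𝓝[<] (1:ℝ)] fun x => x - x ^ 2 / 2 := by
      filter_upwards [Ioo_mem_nhdsLT_of_mem
        (show (1:ℝ) ∈ Set.Ioc 0 1 by constructor <;> norm_num)] with x hx
      have h1 : ∀ n : ℕ, (aa n * Real.exp (-1) ^ n) * (ψ x) ^ n
          = aa n * (x * Real.exp (-x)) ^ n := by
        intro n
        have h2 : Real.exp (-1) * ψ x = x * Real.exp (-x) := by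
          simp only [hψdef]
          rw [show Real.exp (-1) * (x * Real.exp (1 - x))
              = x * (Real.exp (-1) * Real.exp (1 - x)) by ring, ← Real.exp_add]
          have hxx : (-1 : ℝ) + (1 - x) = -x := by ring
          rw [hxx]
        calc (aa n * Real.exp (-1) ^ n) * (ψ x) ^ n
            = aa n * (Real.exp (-1) * ψ x) ^ n := by rw [mul_pow]; ring
          _ = aa n * (x * Real.exp (-x)) ^ n := by rw [h2]
      show ∑' n : ℕ, (aa n * Real.exp (-1) ^ n) * (ψ x) ^ n = x - x ^ 2 / 2
      rw [tsum_congr h1]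
      have hk := key_lt hx.1 hx.2
      unfold S at hk
      exact hk
    have hlim2 : Tendsto (fun x : ℝ => x - x ^ 2 / 2) (𝓝[<] (1:ℝ)) (𝓝 ((1:ℝ) - 1 ^ 2 / 2)) := by
      refine Tendsto.mono_left ?_ nhdsWithin_le_nhds
      have hcont : Continuous fun x : ℝ => x - x ^ 2 / 2 := by continuity
      simpa using hcont.tendsto 1
    have hval : ∑' n : ℕ, aa n * Real.exp (-1) ^ n = (1:ℝ) - 1 ^ 2 / 2 :=
      tendsto_nhds_unique (Tendsto.congr' heq hcomp) hlim2
    show S (1 * Real.exp (-(1:ℝ))) = 1 - 1 ^ 2 / 2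
    rw [one_mul]
    unfold S
    exact hval
end Stmt14Aux

/-- `g(c) = Σ_{k ≥ 1} (1/c) (k^{k-2}/k!) (c e^{-c})^k`, written as a sum over `k+1`, `k : ℕ`. -/
noncomputable def g (c : ℝ) : ℝ :=
  ∑' k : ℕ, (1 / c) * ((((k + 1 : ℕ)) ^ (k - 1) : ℕ) / ((k + 1).factorial : ℝ)) *
    (c * Real.exp (-c)) ^ (k + 1)

/-- `u(c) = 1 - g(c)`, the limiting rescaled distance. -/
noncomputable def u (c : ℝ) : ℝ := 1 - g c

theorem stmt14 (c : ℝ) (hc0 : 0 < c) (hc1 : c ≤ 1) :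
    g c = 1 - c / 2 ∧
    (∑' k : ℕ, ((((k + 1 : ℕ)) ^ (k - 1) : ℕ) / ((k + 1).factorial : ℝ)) *
        (c * Real.exp (-c)) ^ (k + 1) = c - c ^ 2 / 2) ∧
    u c = c / 2 := by
  have hcne : c ≠ 0 := ne_of_gt hc0
  have hx := Stmt14Aux.phi_le hc0 hc1
  have hsum : Summable (fun k : ℕ => Stmt14Aux.aa k * (c * Real.exp (-c)) ^ k) :=
    Stmt14Aux.summable_aa hx
  have hkey := Stmt14Aux.key hc0 hc1
  have htail : ∑' k : ℕ, Stmt14Aux.aa (k + 1) * (c * Real.exp (-c)) ^ (k + 1)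
      = c - c ^ 2 / 2 := by
    have hz := Summable.tsum_eq_zero_add hsum
    rw [Stmt14Aux.aa_zero] at hz
    unfold Stmt14Aux.S at hkey
    rw [hz] at hkey
    simpa using hkey
  have hmatch : ∀ k : ℕ, Stmt14Aux.aa (k + 1) * (c * Real.exp (-c)) ^ (k + 1)
      = ((((k + 1 : ℕ)) ^ (k - 1) : ℕ) / ((k + 1).factorial : ℝ)) * (c * Real.exp (-c)) ^ (k + 1) := by
    intro k
    rw [Stmt14Aux.aa_succ]
  have h2 : (∑' k : ℕ, ((((k + 1 : ℕ)) ^ (k - 1) : ℕ) / ((k + 1).factorial : ℝ)) *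
      (c * Real.exp (-c)) ^ (k + 1)) = c - c ^ 2 / 2 := by
    rw [← tsum_congr hmatch]
    exact htail
  have h1 : g c = 1 - c / 2 := by
    unfold g
    have hassoc : ∀ k : ℕ,
        (1 / c) * ((((k + 1 : ℕ)) ^ (k - 1) : ℕ) / ((k + 1).factorial : ℝ)) *
          (c * Real.exp (-c)) ^ (k + 1)
        = (1 / c) * (((((k + 1 : ℕ)) ^ (k - 1) : ℕ) / ((k + 1).factorial : ℝ)) *
          (c * Real.exp (-c)) ^ (k + 1)) := fun k => mul_assoc _ _ _
    rw [tsum_congr hassoc, tsum_mul_left, h2]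
    field_simp
  exact ⟨h1, h2, by unfold u; rw [h1]; ring⟩
end
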